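/- arXiv:0809.4889 — 8 statements merged into one kernel-verified Lean document; each statement's English description precedes it below -/
import Mathlib

section
/- Let c ∈ ℂ and let f : ℂⁿ × ℂⁿ → ℝ be defined by f(x,y) = |∑_{i=1}^n x_i y_i − c|², where ℂⁿ × ℂⁿ is regarded as a real inner product space with inner product ⟨(x,y),(x',y')⟩ = Re(∑_i x_i conj(x'_i)) + Re(∑_i y_i conj(y'_i)). Then for every curve γ : ℝ → ℂⁿ × ℂⁿ satisfying γ'(t) = −grad f(γ(t)) for all t ≥ 0, the image γ([0,∞)) is a bounded set (equivalently, it is contained in a compact subset of ℂⁿ × ℂⁿ). In other words, −f = −‖μ_ℂ‖² is flow-closed for the linear circle action on the quaternionic vector space ℍⁿ = ℂⁿ × ℂⁿ. -/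
/-!
STATEMENT 0: Flow-closedness of `-‖μ_ℂ‖²` for the linear circle action on `ℍⁿ = ℂⁿ × ℂⁿ`.

We regard `ℂⁿ × ℂⁿ` as a real inner product space via
`⟪(x,y),(x',y')⟫ = Re ∑ xᵢ conj x'ᵢ + Re ∑ yᵢ conj y'ᵢ`,
which is the inner product of `WithLp 2 (EuclideanSpace ℂ (Fin n) × EuclideanSpace ℂ (Fin n))`
viewed as a real inner product space.
-/

noncomputable section

/-- `ℂⁿ × ℂⁿ` with its (real) L² inner product structure. -/
abbrev HypVS (n : ℕ) : Type :=
  WithLp 2 (EuclideanSpace ℂ (Fin n) × EuclideanSpace ℂ (Fin n))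

/-- first component `x` of a point of `ℂⁿ × ℂⁿ` -/
def xPart {n : ℕ} (p : HypVS n) : EuclideanSpace ℂ (Fin n) :=
  (WithLp.equiv 2 (EuclideanSpace ℂ (Fin n) × EuclideanSpace ℂ (Fin n)) p).1

/-- second component `y` of a point of `ℂⁿ × ℂⁿ` -/
def yPart {n : ℕ} (p : HypVS n) : EuclideanSpace ℂ (Fin n) :=
  (WithLp.equiv 2 (EuclideanSpace ℂ (Fin n) × EuclideanSpace ℂ (Fin n)) p).2

/-- The complex moment map `μ_ℂ(x,y) = ∑ xᵢ yᵢ - c`. -/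
def muC {n : ℕ} (c : ℂ) (p : HypVS n) : ℂ :=
  (∑ i, xPart p i * yPart p i) - c

/-!
Write `f = ‖μ_ℂ‖²`. Since `‖∇f(p)‖² = 4 f(p) ‖p‖²`, along the flow `f ∘ γ` solves the linear
equation `u' = -4 ‖γ‖² u`, so `‖μ_ℂ(γ t)‖ = r t := ‖μ_ℂ(γ 0)‖ · exp (-2 ∫₀ᵗ ‖γ‖²)` decays, while
`(‖γ‖²)' = -2 ⟪∇f, γ⟫ = -8 ‖μ_ℂ‖² - 8 ⟪μ_ℂ, c⟫ ≤ 8 ‖c‖ r`.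
Hence `(‖γ‖² + 4 ‖c‖ r)' ≤ 8 ‖c‖ r (1 - ‖γ‖²)`, so this Lyapunov function cannot rise above
`max (‖γ 0‖² + 4 ‖c‖ r 0) (1 + 4 ‖c‖ r 0)`, which therefore bounds `‖γ‖²`.
-/

open Set Real ComplexConjugate InnerProductSpace

theorem le_of_hasDerivAt_nonpos_of_le {Φ Φ' : ℝ → ℝ} {a A : ℝ}
    (hΦ : ∀ t ≥ a, HasDerivAt Φ (Φ' t) t) (ha : Φ a ≤ A)
    (hΦ' : ∀ t ≥ a, A ≤ Φ t → Φ' t ≤ 0) {t : ℝ} (ht : a ≤ t) : Φ t ≤ A := by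
  -- `Φ` can touch the slightly rising barrier `A + ε (s - a)` only where it is not increasing
  have barrier : ∀ ε > 0, Φ t ≤ A + ε * (t - a) := fun ε hε =>
    image_le_of_deriv_right_lt_deriv_boundary (B := fun s => A + ε * (s - a))
      (fun s hs => (hΦ s hs.1).continuousAt.continuousWithinAt)
      (fun s hs => (hΦ s hs.1).hasDerivWithinAt) (by simpa using ha)
      (fun s => by simpa using ((hasDerivAt_id s).sub_const a).const_mul ε |>.const_add A)
      (fun s hs hΦs => (hΦ' s hs.1 (hΦs ▸ by nlinarith [hs.1])).trans_lt hε)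
      ⟨ht, le_rfl⟩
  refine le_of_forall_pos_le_add fun ε hε => ?_
  have hta : 0 < t - a + 1 := by linarith
  have hε' : ε / (t - a + 1) * (t - a) ≤ ε := by
    rw [div_mul_eq_mul_div, div_le_iff₀ hta]
    nlinarith
  linarith [barrier _ (div_pos hε hta)]

theorem eq_mul_exp_sub_of_hasDerivAt {u a A : ℝ → ℝ} {t₀ : ℝ}
    (hu : ∀ t ≥ t₀, HasDerivAt u (a t * u t) t) (hA : ∀ t ≥ t₀, HasDerivAt A (a t) t)
    {t : ℝ} (ht : t₀ ≤ t) : u t = u t₀ * exp (A t - A t₀) := by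
  have hconst : ∀ s ≥ t₀, HasDerivAt (fun s => u s * exp (-A s)) 0 s := fun s hs =>
    ((hu s hs).mul (hA s hs).neg.exp).congr_deriv (by ring)
  have heq := constant_of_has_deriv_right_zero (a := t₀) (b := t)
    (fun s hs => (hconst s hs.1).continuousAt.continuousWithinAt)
    (fun s hs => (hconst s hs.1).hasDerivWithinAt) t ⟨ht, le_rfl⟩
  calc u t = u t * exp (-A t) * exp (A t) := by rw [mul_assoc, ← exp_add]; simp
    _ = u t₀ * exp (A t - A t₀) := by rw [heq, mul_assoc, ← exp_add, neg_add_eq_sub]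

theorem exists_hasDerivAt_of_continuousOn_Ici {g : ℝ → ℝ} {a : ℝ} (hg : ContinuousOn g (Ici a)) :
    ∃ G : ℝ → ℝ, ∀ t ≥ a, HasDerivAt G (g t) t := by
  have hcont : Continuous fun s => g (max s a) :=
    hg.comp_continuous (continuous_id.max continuous_const) fun s => le_max_right s a
  refine ⟨fun t => ∫ s in a..t, g (max s a), fun t ht => ?_⟩
  simpa only [max_eq_left ht] using intervalIntegral.integral_hasDerivAt_right
    (hcont.intervalIntegrable a t) (hcont.stronglyMeasurableAtFilter _ _) hcont.continuousAt

theorem le_max_of_hasDerivAt_le_of_decay {N N' r : ℝ → ℝ} {C a : ℝ} (hC : 0 ≤ C)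
    (hN : ∀ t ≥ a, HasDerivAt N (N' t) t) (hN_nonneg : ∀ t ≥ a, 0 ≤ N t)
    (hN' : ∀ t ≥ a, N' t ≤ 2 * C * r t) (hr : ∀ t ≥ a, HasDerivAt r (-(2 * N t * r t)) t)
    (hr_nonneg : ∀ t ≥ a, 0 ≤ r t) {t : ℝ} (ht : a ≤ t) :
    N t ≤ max (N a + C * r a) (1 + C * r a) := by
  have hr_le : ∀ s ≥ a, r s ≤ r a := fun s hs =>
    le_of_hasDerivAt_nonpos_of_le hr le_rfl
      (fun u hu _ => by nlinarith [mul_nonneg (hN_nonneg u hu) (hr_nonneg u hu)]) hs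
  -- `N + C r` can only decrease once `N ≥ 1`, since then `(N + C r)' ≤ 2 C r (1 - N)`
  have hΦ : N t + C * r t ≤ max (N a + C * r a) (1 + C * r a) :=
    le_of_hasDerivAt_nonpos_of_le (Φ := fun s => N s + C * r s)
      (fun s hs => (hN s hs).add ((hr s hs).const_mul C)) (le_max_left _ _)
      (fun s hs hΦs => by
        have hN1 : 1 ≤ N s := by
          nlinarith [le_max_right (N a + C * r a) (1 + C * r a),
            mul_le_mul_of_nonneg_left (hr_le s hs) hC]
        nlinarith [mul_nonneg hC (hr_nonneg s hs), hN' s hs]) ht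
  nlinarith [mul_nonneg hC (hr_nonneg t ht)]

theorem HasGradientAt.hasDerivAt_comp {E : Type*} [NormedAddCommGroup E] [InnerProductSpace ℝ E]
    [CompleteSpace E] {f : E → ℝ} {g v : E} {γ : ℝ → E} {t : ℝ} (hf : HasGradientAt f g (γ t))
    (hγ : HasDerivAt γ v t) : HasDerivAt (fun s => f (γ s)) ⟪g, v⟫_ℝ t :=
  hf.hasFDerivAt.comp_hasDerivAt t hγ

namespace HypVS

variable {n : ℕ}

def xPartCLM (n : ℕ) (i : Fin n) : HypVS n →L[ℝ] ℂ :=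
  ((EuclideanSpace.proj i).restrictScalars ℝ).comp
    (((ContinuousLinearMap.fst ℂ _ _).restrictScalars ℝ).comp
      (WithLp.prodContinuousLinearEquiv 2 ℝ _ _).toContinuousLinearMap)

def yPartCLM (n : ℕ) (i : Fin n) : HypVS n →L[ℝ] ℂ :=
  ((EuclideanSpace.proj i).restrictScalars ℝ).comp
    (((ContinuousLinearMap.snd ℂ _ _).restrictScalars ℝ).comp
      (WithLp.prodContinuousLinearEquiv 2 ℝ _ _).toContinuousLinearMap)

@[simp] theorem xPartCLM_apply (i : Fin n) (p : HypVS n) : xPartCLM n i p = xPart p i := rfl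
@[simp] theorem yPartCLM_apply (i : Fin n) (p : HypVS n) : yPartCLM n i p = yPart p i := rfl

theorem real_inner_eq_sum (p q : HypVS n) :
    ⟪p, q⟫_ℝ = ∑ i, ⟪xPart p i, xPart q i⟫_ℝ + ∑ i, ⟪yPart p i, yPart q i⟫_ℝ := by
  rw [WithLp.prod_inner_apply, PiLp.inner_apply, PiLp.inner_apply]
  rfl

theorem hasFDerivAt_muC (c : ℂ) (p : HypVS n) :
    HasFDerivAt (muC c) (∑ i, (xPart p i • yPartCLM n i + yPart p i • xPartCLM n i)) p :=
  (HasFDerivAt.fun_sum fun i _ =>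
    (xPartCLM n i).hasFDerivAt.mul (yPartCLM n i).hasFDerivAt).sub_const c

def gradNormSqMuC (c : ℂ) (p : HypVS n) : HypVS n :=
  (WithLp.equiv 2 _).symm
    ((WithLp.equiv 2 ((_ : Fin n) → ℂ)).symm (fun i => 2 * muC c p * conj (yPart p i)),
     (WithLp.equiv 2 ((_ : Fin n) → ℂ)).symm (fun i => 2 * muC c p * conj (xPart p i)))

@[simp] theorem xPart_gradNormSqMuC (c : ℂ) (p : HypVS n) (i : Fin n) :
    xPart (gradNormSqMuC c p) i = 2 * muC c p * conj (yPart p i) := rfl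
@[simp] theorem yPart_gradNormSqMuC (c : ℂ) (p : HypVS n) (i : Fin n) :
    yPart (gradNormSqMuC c p) i = 2 * muC c p * conj (xPart p i) := rfl

theorem hasGradientAt_norm_muC_sq (c : ℂ) (p : HypVS n) :
    HasGradientAt (fun q => ‖muC c q‖ ^ 2) (gradNormSqMuC c p) p := by
  refine hasGradientAt_iff_hasFDerivAt.mpr ((hasFDerivAt_muC c p).norm_sq.congr_fderiv ?_)
  ext v
  simp only [toDual_apply_apply, real_inner_eq_sum, smul_apply, ContinuousLinearMap.comp_apply,
    innerSL_apply_apply, sum_apply, add_apply, xPartCLM_apply, yPartCLM_apply, Complex.inner,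
    xPart_gradNormSqMuC, yPart_gradNormSqMuC, Finset.sum_mul, Complex.re_sum, smul_eq_mul,
    nsmul_eq_mul, Nat.cast_ofNat, Finset.mul_sum, ← Finset.sum_add_distrib]
  refine Finset.sum_congr rfl fun i _ => ?_
  simp only [map_mul, Complex.conj_conj, Complex.add_re, Complex.add_im, Complex.mul_re,
    Complex.mul_im, Complex.conj_re, Complex.conj_im, Complex.re_ofNat, Complex.im_ofNat]
  ring

theorem norm_gradNormSqMuC_sq (c : ℂ) (p : HypVS n) :
    ‖gradNormSqMuC c p‖ ^ 2 = 4 * ‖muC c p‖ ^ 2 * ‖p‖ ^ 2 := by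
  rw [← real_inner_self_eq_norm_sq (gradNormSqMuC c p), ← real_inner_self_eq_norm_sq p,
    real_inner_eq_sum, real_inner_eq_sum]
  simp only [real_inner_self_eq_norm_sq, xPart_gradNormSqMuC, yPart_gradNormSqMuC, norm_mul,
    Complex.norm_conj, Complex.norm_ofNat, mul_pow, ← Finset.mul_sum]
  ring

theorem inner_gradNormSqMuC_self (c : ℂ) (p : HypVS n) :
    ⟪gradNormSqMuC c p, p⟫_ℝ = 4 * ⟪muC c p, muC c p + c⟫_ℝ := by
  have hμ : muC c p + c = ∑ i, xPart p i * yPart p i := sub_add_cancel _ _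
  rw [real_inner_eq_sum, hμ, inner_sum, Finset.mul_sum, ← Finset.sum_add_distrib]
  refine Finset.sum_congr rfl fun i _ => ?_
  simp only [Complex.inner, xPart_gradNormSqMuC, yPart_gradNormSqMuC, map_mul, Complex.mul_re,
    Complex.mul_im, Complex.conj_re, Complex.conj_im, Complex.re_ofNat, Complex.im_ofNat]
  ring

theorem neg_le_inner_gradNormSqMuC_self (c : ℂ) (p : HypVS n) :
    -(4 * ‖c‖ * ‖muC c p‖) ≤ ⟪gradNormSqMuC c p, p⟫_ℝ := by
  rw [inner_gradNormSqMuC_self, inner_add_right, real_inner_self_eq_norm_sq]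
  nlinarith [neg_le_of_abs_le (abs_real_inner_le_norm (muC c p) c), sq_nonneg ‖muC c p‖]

theorem exists_norm_sq_le_of_hasDerivAt_neg_gradNormSqMuC {c : ℂ} {γ : ℝ → HypVS n}
    (hγ : ∀ t ≥ 0, HasDerivAt γ (-gradNormSqMuC c (γ t)) t) :
    ∃ M, ∀ t ≥ 0, ‖γ t‖ ^ 2 ≤ M := by
  obtain ⟨I, hI⟩ := exists_hasDerivAt_of_continuousOn_Ici (g := fun t => ‖γ t‖ ^ 2) (a := 0)
    fun t ht => ((hγ t ht).continuousAt.norm.pow 2).continuousWithinAt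
  set r : ℝ → ℝ := fun t => ‖muC c (γ 0)‖ * exp (-2 * (I t - I 0)) with hr_def
  have hr : ∀ t ≥ 0, HasDerivAt r (-(2 * ‖γ t‖ ^ 2 * r t)) t := fun t ht =>
    ((((hI t ht).sub_const (I 0)).const_mul (-2)).exp.const_mul _).congr_deriv (by ring)
  have hu : ∀ s ≥ 0, HasDerivAt (fun s => ‖muC c (γ s)‖ ^ 2)
      (-4 * ‖γ s‖ ^ 2 * ‖muC c (γ s)‖ ^ 2) s := fun s hs => by
    convert (hasGradientAt_norm_muC_sq c (γ s)).hasDerivAt_comp (hγ s hs) using 1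
    rw [inner_neg_right, real_inner_self_eq_norm_sq, norm_gradNormSqMuC_sq]
    ring
  have hμ : ∀ t ≥ 0, ‖muC c (γ t)‖ = r t := fun t ht => by
    have hsq := eq_mul_exp_sub_of_hasDerivAt hu (fun s hs => (hI s hs).const_mul (-4)) ht
    refine (pow_left_inj₀ (norm_nonneg _) (by positivity) two_ne_zero).mp ?_
    rw [hsq, hr_def, mul_pow, ← exp_nat_mul, Nat.cast_ofNat]
    congr 2
    ring
  refine ⟨_, fun t ht => le_max_of_hasDerivAt_le_of_decay (C := 4 * ‖c‖) (by positivity)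
    (fun s hs => (hγ s hs).norm_sq) (fun _ _ => sq_nonneg _) (fun s hs => ?_) hr
    (fun _ _ => by positivity) ht⟩
  rw [inner_neg_right, real_inner_comm, ← hμ s hs]
  linarith [neg_le_inner_gradNormSqMuC_self c (γ s)]

end HypVS

open HypVS in
theorem stmt0 (n : ℕ) (c : ℂ) (f : HypVS n → ℝ)
    (hf : ∀ p, f p = ‖muC c p‖ ^ 2)
    (γ : ℝ → HypVS n)
    (hγ : ∀ t : ℝ, 0 ≤ t → HasDerivAt γ (-(gradient f (γ t))) t) :
    Bornology.IsBounded (γ '' Set.Ici 0) ∧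
      ∃ K : Set (HypVS n), IsCompact K ∧ γ '' Set.Ici 0 ⊆ K := by
  obtain rfl : f = fun p => ‖muC c p‖ ^ 2 := funext hf
  obtain ⟨M, hM⟩ := exists_norm_sq_le_of_hasDerivAt_neg_gradNormSqMuC fun t ht => by
    simpa only [(hasGradientAt_norm_muC_sq c (γ t)).gradient] using hγ t ht
  have hball : γ '' Ici 0 ⊆ Metric.closedBall 0 √M := by
    rintro _ ⟨t, ht, rfl⟩
    rw [mem_closedBall_zero_iff]
    exact le_sqrt_of_sq_le (hM t ht)
  exact ⟨Metric.isBounded_closedBall.subset hball, _, isCompact_closedBall _ _, hball⟩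
end
end

section
/- Let c ∈ ℂ, f(x,y) = |∑_{i=1}^n x_i y_i − c|² and ρ(x,y) = ‖x‖² + ‖y‖² on ℂⁿ × ℂⁿ regarded as a real inner product space. Let γ : ℝ → ℂⁿ × ℂⁿ satisfy γ'(t) = −grad f(γ(t)) for all t ≥ 0, and suppose that ∑_i x_i y_i ≠ c at γ(t) for all t ≥ 0 (i.e. f(γ(t)) > 0). Then for all t ≥ 0, ρ(γ(t)) + √(f(γ(t))) ≤ max{ 4|c| + √(f(γ(0))), ρ(γ(0)) + √(f(γ(0))) }. -/
/-!
Write `μ = ∑ xᵢ yᵢ - c`, so `f = |μ|²` and `∇f(p) = 2μ · (ȳ, x̄)`, whence `‖∇f‖² = 4 f ρ` and,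
since `∑ xᵢ yᵢ` is quadratic, `⟨∇f(p), p⟩ = 4 Re (μ̄ (μ + c)) ≥ 4|μ|² - 4|μ||c|`. Along the flow
`f` decreases, `(√f)' = -2 √f ρ` and `ρ' = -2 ⟨∇f, p⟩`, so `(ρ + √f)' ≤ 2 √f (4|c| - ρ)`. Hence
`ρ + √f` cannot cross the level `max (4|c| + √f₀) (ρ₀ + √f₀)`: at that level `ρ ≥ 4|c|` because
`√f ≤ √f₀`.
-/

noncomputable section

open ComplexConjugate Set

theorem image_le_of_deriv_nonpos_above {φ φ' : ℝ → ℝ} {a b M : ℝ}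
    (hφ : ∀ t ∈ Icc a b, HasDerivAt φ (φ' t) t) (ha : φ a ≤ M)
    (hM : ∀ t ∈ Ico a b, M ≤ φ t → φ' t ≤ 0) : ∀ t ∈ Icc a b, φ t ≤ M := by
  intro t ht
  -- The fencing theorem wants a strict inequality where `φ` meets the barrier, hence the tilt `ε`.
  refine le_of_forall_pos_le_add fun δ hδ => ?_
  have hba : 0 < b - a + 1 := by linarith [ht.1.trans ht.2]
  set ε := δ / (b - a + 1)
  have hε : 0 < ε := div_pos hδ hba
  have hB : ∀ s, HasDerivAt (fun s => M + ε * (s - a)) ε s := fun s => by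
    simpa using ((hasDerivAt_id s).sub_const a).const_mul ε |>.const_add M
  have key := image_le_of_deriv_right_lt_deriv_boundary
    (fun s hs => (hφ s hs).continuousAt.continuousWithinAt)
    (fun s hs => (hφ s (Ico_subset_Icc_self hs)).hasDerivWithinAt) (by simpa using ha) hB
    (fun s hs hs' => (hM s hs (hs' ▸ le_add_of_nonneg_right
      (mul_nonneg hε.le (sub_nonneg.2 hs.1)))).trans_lt hε) ht
  calc φ t ≤ M + ε * (t - a) := key
    _ ≤ M + δ := by
      have : ε * (t - a) ≤ ε * (b - a + 1) := by gcongr; linarith [ht.2]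
      rw [div_mul_cancel₀ _ hba.ne'] at this
      linarith

theorem Complex.norm_sq_sub_norm_mul_le_re_conj_mul_add (z w : ℂ) :
    ‖z‖ ^ 2 - ‖z‖ * ‖w‖ ≤ (conj z * (z + w)).re := by
  have h : |(conj z * w).re| ≤ ‖z‖ * ‖w‖ := by
    simpa using Complex.abs_re_le_norm (conj z * w)
  rw [mul_add, Complex.add_re, Complex.conj_mul', ← Complex.ofReal_pow, Complex.ofReal_re]
  linarith [neg_abs_le (conj z * w).re]

theorem HasGradientAt.hasDerivAt_comp_of_flow {F : Type*} [NormedAddCommGroup F]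
    [InnerProductSpace ℝ F] [CompleteSpace F] {f : F → ℝ} {G : F} {γ : ℝ → F} {t : ℝ}
    (hf : HasGradientAt f G (γ t)) (hγ : HasDerivAt γ (-G) t) :
    HasDerivAt (f ∘ γ) (-‖G‖ ^ 2) t := by
  simpa [inner_neg_right, real_inner_self_eq_norm_sq] using hf.hasFDerivAt.comp_hasDerivAt t hγ

namespace HypVS

variable {n : ℕ}

protected theorem real_inner_eq_re_inner (u v : HypVS n) : inner ℝ u v = (inner ℂ u v).re := by
  simp only [WithLp.prod_inner_apply, PiLp.inner_apply, Complex.re_sum, Complex.add_re]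
  simp [Complex.inner, Complex.mul_re]

theorem hasGradientAt_norm_sq_of_hasFDerivAt_innerSL {g : HypVS n → ℂ} {p q : HypVS n}
    (hg : HasFDerivAt g (innerSL ℂ q) p) :
    HasGradientAt (fun x => ‖g x‖ ^ 2) ((2 * g p) • q) p := by
  rw [hasGradientAt_iff_hasFDerivAt]
  refine (hg.restrictScalars ℝ).norm_sq.congr_fderiv (ContinuousLinearMap.ext fun v => ?_)
  simp only [smul_apply, ContinuousLinearMap.comp_apply, ContinuousLinearMap.coe_restrictScalars',
    innerSL_apply_apply, InnerProductSpace.toDual_apply_apply, HypVS.real_inner_eq_re_inner,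
    inner_smul_left, Complex.inner]
  rw [map_mul, Complex.conj_ofNat, mul_assoc, mul_comm (conj (g p)), ← Complex.ofReal_ofNat,
    Complex.re_ofReal_mul, nsmul_eq_mul, Nat.cast_ofNat]

def swapConj (p : HypVS n) : HypVS n :=
  WithLp.toLp 2 (WithLp.toLp 2 fun i => conj (yPart p i), WithLp.toLp 2 fun i => conj (xPart p i))

theorem norm_swapConj (p : HypVS n) : ‖swapConj p‖ = ‖p‖ := by
  refine (sq_eq_sq₀ (norm_nonneg _) (norm_nonneg _)).1 ?_
  rw [WithLp.prod_norm_sq_eq_of_L2, WithLp.prod_norm_sq_eq_of_L2, add_comm]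
  simp [swapConj, EuclideanSpace.norm_sq_eq, xPart, yPart]

theorem inner_swapConj (p v : HypVS n) :
    inner ℂ (swapConj p) v = ∑ i, (yPart p i * xPart v i + xPart p i * yPart v i) := by
  simp [swapConj, WithLp.prod_inner_apply, PiLp.inner_apply, Finset.sum_add_distrib, xPart, yPart,
    mul_comm]

def complexMoment (c : ℂ) (p : HypVS n) : ℂ := ∑ i, xPart p i * yPart p i - c

theorem hasFDerivAt_complexMoment (c : ℂ) (p : HypVS n) :
    HasFDerivAt (complexMoment c) (innerSL ℂ (swapConj p)) p := by
  let X (i : Fin n) : HypVS n →L[ℂ] ℂ := (EuclideanSpace.proj i).comp (WithLp.fstL 2 ℂ _ _)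
  let Y (i : Fin n) : HypVS n →L[ℂ] ℂ := (EuclideanSpace.proj i).comp (WithLp.sndL 2 ℂ _ _)
  have h : HasFDerivAt (fun q => ∑ i, X i q * Y i q) (∑ i, (X i p • Y i + Y i p • X i)) p :=
    HasFDerivAt.fun_sum fun i _ => (X i).hasFDerivAt.mul (Y i).hasFDerivAt
  refine (h.sub_const c).congr_fderiv (ContinuousLinearMap.ext fun v => ?_)
  rw [innerSL_apply_apply, inner_swapConj]
  simp [X, Y, xPart, yPart, add_comm]

def momentGrad (c : ℂ) (p : HypVS n) : HypVS n := (2 * complexMoment c p) • swapConj p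

theorem hasGradientAt_norm_sq_complexMoment (c : ℂ) (p : HypVS n) :
    HasGradientAt (fun q => ‖complexMoment c q‖ ^ 2) (momentGrad c p) p :=
  hasGradientAt_norm_sq_of_hasFDerivAt_innerSL (hasFDerivAt_complexMoment c p)

theorem norm_momentGrad (c : ℂ) (p : HypVS n) :
    ‖momentGrad c p‖ = 2 * ‖complexMoment c p‖ * ‖p‖ := by
  rw [momentGrad, norm_smul, norm_mul, norm_swapConj, Complex.norm_ofNat]

theorem inner_momentGrad_self (c : ℂ) (p : HypVS n) :
    inner ℝ (momentGrad c p) p = 4 * (conj (complexMoment c p) * (complexMoment c p + c)).re := by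
  have hsum :
      ∑ i, (yPart p i * xPart p i + xPart p i * yPart p i) = 2 * (complexMoment c p + c) := by
    simp only [complexMoment, sub_add_cancel, Finset.mul_sum, two_mul, mul_comm (yPart p _)]
  rw [HypVS.real_inner_eq_re_inner, momentGrad, inner_smul_left, inner_swapConj, hsum,
    map_mul, Complex.conj_ofNat, show ∀ z w : ℂ, 2 * z * (2 * w) = 4 * (z * w) by intros; ring,
    ← Complex.ofReal_ofNat, Complex.re_ofReal_mul]

theorem hasDerivAt_norm_complexMoment_of_flow {c : ℂ} {γ : ℝ → HypVS n} {t : ℝ}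
    (hγ : HasDerivAt γ (-momentGrad c (γ t)) t) (hμ : complexMoment c (γ t) ≠ 0) :
    HasDerivAt (fun s => ‖complexMoment c (γ s)‖)
      (-(2 * ‖complexMoment c (γ t)‖ * ‖γ t‖ ^ 2)) t := by
  have h := (hasGradientAt_norm_sq_complexMoment c (γ t)).hasDerivAt_comp_of_flow hγ
  have hμ' : ‖complexMoment c (γ t)‖ ≠ 0 := norm_ne_zero_iff.2 hμ
  have hsqrt := (Real.hasDerivAt_sqrt (pow_ne_zero 2 hμ')).comp t h
  rw [show Real.sqrt ∘ ((fun q => ‖complexMoment c q‖ ^ 2) ∘ γ) = fun s => ‖complexMoment c (γ s)‖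
    from funext fun s => Real.sqrt_sq (norm_nonneg _)] at hsqrt
  refine hsqrt.congr_deriv ?_
  rw [norm_momentGrad, Real.sqrt_sq (norm_nonneg _)]
  field_simp

theorem norm_sq_add_norm_complexMoment_le_of_flow (c : ℂ) (γ : ℝ → HypVS n)
    (hγ : ∀ t, 0 ≤ t → HasDerivAt γ (-momentGrad c (γ t)) t)
    (hμ : ∀ t, 0 ≤ t → complexMoment c (γ t) ≠ 0) (T : ℝ) (hT : 0 ≤ T) :
    ‖γ T‖ ^ 2 + ‖complexMoment c (γ T)‖ ≤
      max (4 * ‖c‖ + ‖complexMoment c (γ 0)‖) (‖γ 0‖ ^ 2 + ‖complexMoment c (γ 0)‖) := by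
  have hnorm t (ht : 0 ≤ t) := hasDerivAt_norm_complexMoment_of_flow (hγ t ht) (hμ t ht)
  have hanti : AntitoneOn (fun s => ‖complexMoment c (γ s)‖) (Ici 0) := by
    refine antitoneOn_of_hasDerivWithinAt_nonpos (convex_Ici 0)
      (fun s hs => (hnorm s hs).continuousAt.continuousWithinAt)
      (fun s hs => (hnorm s (interior_subset hs)).hasDerivWithinAt) fun s _ =>
      neg_nonpos.2 (by positivity)
  refine image_le_of_deriv_nonpos_above (φ := fun s => ‖γ s‖ ^ 2 + ‖complexMoment c (γ s)‖)
    (fun t ht => (hγ t ht.1).norm_sq.add (hnorm t ht.1))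
    (le_max_right _ _) (fun t ht hM => ?_) T ⟨hT, le_rfl⟩
  set m := ‖complexMoment c (γ t)‖
  have hm_le : m ≤ ‖complexMoment c (γ 0)‖ := hanti self_mem_Ici ht.1 ht.1
  have hρ : 4 * ‖c‖ ≤ ‖γ t‖ ^ 2 := by linarith [(le_max_left _ _).trans hM]
  have hinner : 4 * (m ^ 2 - m * ‖c‖) ≤ inner ℝ (momentGrad c (γ t)) (γ t) := by
    rw [inner_momentGrad_self]
    linarith [Complex.norm_sq_sub_norm_mul_le_re_conj_mul_add (complexMoment c (γ t)) c]
  rw [inner_neg_right, real_inner_comm]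
  nlinarith [mul_nonneg (norm_nonneg (complexMoment c (γ t))) (sub_nonneg.2 hρ), sq_nonneg m]

end HypVS

theorem stmt1 (n : ℕ) (c : ℂ) (f ρ : HypVS n → ℝ)
    (hf : ∀ p, f p = ‖(∑ i, xPart p i * yPart p i) - c‖ ^ 2)
    (hρ : ∀ p, ρ p = ‖xPart p‖ ^ 2 + ‖yPart p‖ ^ 2)
    (γ : ℝ → HypVS n)
    (hγ : ∀ t : ℝ, 0 ≤ t → HasDerivAt γ (-(gradient f (γ t))) t)
    (hne : ∀ t : ℝ, 0 ≤ t → (∑ i, xPart (γ t) i * yPart (γ t) i) ≠ c) :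
    ∀ t : ℝ, 0 ≤ t →
      ρ (γ t) + Real.sqrt (f (γ t)) ≤
        max (4 * ‖c‖ + Real.sqrt (f (γ 0))) (ρ (γ 0) + Real.sqrt (f (γ 0))) := by
  have hf' : f = fun p => ‖HypVS.complexMoment c p‖ ^ 2 := funext hf
  have hρ' p : ρ p = ‖p‖ ^ 2 := by rw [hρ, WithLp.prod_norm_sq_eq_of_L2]; rfl
  have hsqrt p : √(f p) = ‖HypVS.complexMoment c p‖ := by rw [hf', Real.sqrt_sq (norm_nonneg _)]
  have hgrad p : gradient f p = HypVS.momentGrad c p := by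
    rw [hf']; exact (HypVS.hasGradientAt_norm_sq_complexMoment c p).gradient
  intro t ht
  rw [hρ', hρ', hsqrt, hsqrt]
  exact HypVS.norm_sq_add_norm_complexMoment_le_of_flow c γ (fun t ht => hgrad (γ t) ▸ hγ t ht)
    (fun t ht => sub_ne_zero.2 (hne t ht)) t ht
end
end

section
/- Let c ∈ ℂ, f(x,y) = |∑_{i=1}^n x_i y_i − c|² and ρ(x,y) = ‖x‖² + ‖y‖² on ℂⁿ × ℂⁿ regarded as a real inner product space. Then for all (x,y), ⟨grad ρ(x,y), grad f(x,y)⟩ = 8 Re( μ_ℂ(x,y) · conj(∑_i x_i y_i) ), and this quantity is at least 8 f(x,y) − 8 |c| √(f(x,y)). -/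
/-!
Since `grad ρ (p) = 2p`, the pairing `⟪grad ρ, grad f⟫` at `p` is twice the radial derivative
`Df(p) p`. The map `S = ∑ xᵢ yᵢ` is homogeneous of degree 2, so Euler's identity gives
`DS(p) p = 2 S(p)`, and differentiating `f = |S - c|²` yields
`Df(p) p = 4 Re(μ · conj S)` with `μ = S - c`.
The lower bound is `Re(μ · conj(μ + c)) = |μ|² + Re(μ · conj c) ≥ |μ|² - |μ| |c|` with `|μ| = √f`.
-/

noncomputable section

open scoped RealInnerProductSpace

section Calculus

variable {𝕜 E F : Type*} [NontriviallyNormedField 𝕜] [NormedAddCommGroup E] [NormedSpace 𝕜 E]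
  [NormedAddCommGroup F] [NormedSpace 𝕜 F]

theorem HasFDerivAt.apply_self_of_homogeneous {g : E → F} {L : E →L[𝕜] F} {p : E}
    (hg : HasFDerivAt g L p) (k : ℕ) (hom : ∀ t : 𝕜, g (t • p) = t ^ k • g p) :
    L p = (k : 𝕜) • g p := by
  have hray : HasDerivAt (fun t : 𝕜 => t • p) p 1 := by
    simpa using (hasDerivAt_id (1 : 𝕜)).smul_const p
  have hcomp : HasDerivAt (fun t : 𝕜 => g (t • p)) (L p) 1 :=
    (one_smul 𝕜 p ▸ hg).comp_hasDerivAt 1 hray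
  have hpow : HasDerivAt (fun t : 𝕜 => t ^ k • g p) ((k : 𝕜) • g p) 1 := by
    simpa using (hasDerivAt_pow k (1 : 𝕜)).smul_const (g p)
  exact hcomp.unique (by simpa only [hom] using hpow)

end Calculus

theorem gradient_norm_sq {F : Type*} [NormedAddCommGroup F] [InnerProductSpace ℝ F]
    [CompleteSpace F] (x : F) : gradient (fun x => ‖x‖ ^ 2) x = (2 : ℝ) • x := by
  have hdual : InnerProductSpace.toDual ℝ F ((2 : ℝ) • x) = 2 • innerSL ℝ x := by
    ext y
    simp [two_mul]
  exact HasGradientAt.gradient (hasGradientAt_iff_hasFDerivAt.2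
    (hdual ▸ (hasStrictFDerivAt_norm_sq x).hasFDerivAt))

theorem Complex.norm_sq_sub_norm_mul_norm_le_re_mul_conj_add (a c : ℂ) :
    ‖a‖ ^ 2 - ‖c‖ * ‖a‖ ≤ (a * starRingEnd ℂ (a + c)).re := by
  have hcross : -(‖a‖ * ‖c‖) ≤ (a * starRingEnd ℂ c).re := by
    simpa using neg_le_of_abs_le ((abs_re_le_norm _).trans (norm_mul a (starRingEnd ℂ c)).le)
  rw [map_add, mul_add, add_re, mul_conj, normSq_eq_norm_sq, ofReal_re]
  linarith

namespace HypVS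

variable {n : ℕ}

def xyPairing (p : HypVS n) : ℂ := ∑ i, xPart p i * yPart p i

theorem norm_sq_eq (p : HypVS n) : ‖p‖ ^ 2 = ‖xPart p‖ ^ 2 + ‖yPart p‖ ^ 2 :=
  WithLp.prod_norm_sq_eq_of_L2 p

theorem xyPairing_smul (t : ℝ) (p : HypVS n) : xyPairing (t • p) = t ^ 2 • xyPairing p := by
  simp only [xyPairing, xPart, yPart, Finset.smul_sum]
  refine Finset.sum_congr rfl fun i _ => ?_
  simp only [WithLp.equiv_apply, WithLp.ofLp_smul, Prod.smul_fst, Prod.smul_snd, WithLp.ofLp_fst,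
    WithLp.ofLp_snd, PiLp.smul_apply, Complex.real_smul, Complex.ofReal_pow]
  ring

theorem differentiable_xPart_apply (i : Fin n) : Differentiable ℝ fun q : HypVS n => xPart q i :=
  (((EuclideanSpace.proj i).comp ((ContinuousLinearMap.fst ℂ _ _).comp
    (WithLp.prodContinuousLinearEquiv 2 ℂ _ _).toContinuousLinearMap)).restrictScalars ℝ :
      HypVS n →L[ℝ] ℂ).differentiable

theorem differentiable_yPart_apply (i : Fin n) : Differentiable ℝ fun q : HypVS n => yPart q i :=
  (((EuclideanSpace.proj i).comp ((ContinuousLinearMap.snd ℂ _ _).comp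
    (WithLp.prodContinuousLinearEquiv 2 ℂ _ _).toContinuousLinearMap)).restrictScalars ℝ :
      HypVS n →L[ℝ] ℂ).differentiable

theorem differentiable_xyPairing : Differentiable ℝ (xyPairing (n := n)) :=
  Differentiable.fun_sum fun i _ => (differentiable_xPart_apply i).mul (differentiable_yPart_apply i)

theorem fderiv_xyPairing_self (p : HypVS n) : fderiv ℝ xyPairing p p = (2 : ℝ) • xyPairing p := by
  exact_mod_cast (differentiable_xyPairing p).hasFDerivAt.apply_self_of_homogeneous 2
    (fun t => xyPairing_smul t p)

theorem fderiv_norm_sq_muC_self (c : ℂ) (p : HypVS n) :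
    fderiv ℝ (fun q => ‖muC c q‖ ^ 2) p p = 4 * (muC c p * starRingEnd ℂ (xyPairing p)).re := by
  have hμ : HasFDerivAt (muC c) (fderiv ℝ xyPairing p) p :=
    (differentiable_xyPairing p).hasFDerivAt.sub_const c
  rw [hμ.norm_sq.fderiv, smul_apply, ContinuousLinearMap.comp_apply,
    innerSL_apply_apply, fderiv_xyPairing_self, real_inner_smul_right, real_inner_comm, Complex.inner,
    nsmul_eq_mul]
  ring

end HypVS

theorem stmt3 (n : ℕ) (c : ℂ) (f ρ : HypVS n → ℝ)
    (hf : ∀ p, f p = ‖muC c p‖ ^ 2)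
    (hρ : ∀ p, ρ p = ‖xPart p‖ ^ 2 + ‖yPart p‖ ^ 2)
    (p : HypVS n) :
    ⟪gradient ρ p, gradient f p⟫ =
        8 * (muC c p * (starRingEnd ℂ) (∑ i, xPart p i * yPart p i)).re ∧
    8 * f p - 8 * ‖c‖ * Real.sqrt (f p) ≤ ⟪gradient ρ p, gradient f p⟫ := by
  have hρ_eq : ρ = fun q => ‖q‖ ^ 2 := funext fun q => by rw [hρ, HypVS.norm_sq_eq]
  have hf_eq : f = fun q => ‖muC c q‖ ^ 2 := funext hf
  have hinner :
      ⟪gradient ρ p, gradient f p⟫ = 8 * (muC c p * starRingEnd ℂ (HypVS.xyPairing p)).re := by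
    rw [hρ_eq, gradient_norm_sq, real_inner_smul_left, real_inner_comm, inner_gradient_left, hf_eq,
      HypVS.fderiv_norm_sq_muC_self]
    ring
  refine ⟨hinner, ?_⟩
  have hbound := Complex.norm_sq_sub_norm_mul_norm_le_re_mul_conj_add (muC c p) c
  rw [show muC c p + c = HypVS.xyPairing p from sub_add_cancel _ _] at hbound
  rw [hinner, hf p, Real.sqrt_sq (norm_nonneg _)]
  linarith
end
end

section
/- Let c ∈ ℂ with c ≠ 0 and f(x,y) = |∑_{i=1}^n x_i y_i − c|² on ℂⁿ × ℂⁿ regarded as a real inner product space. Then grad f(x,y) = 0 if and only if ∑_i x_i y_i = c or (x,y) = (0,0). In particular, the only critical point of f outside the zero set of μ_ℂ (the only non-minimal critical point) is the origin. -/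
noncomputable section

/-!
`μ_ℂ` is holomorphic, so the real differential of `f = ‖μ_ℂ‖²` at `p` is
`v ↦ 2 Re (conj (μ_ℂ p) · dμ_ℂ(p) v)` with `dμ_ℂ(p)` complex linear. A complex linear functional
whose values are all real-orthogonal to some `w ≠ 0` vanishes, so the gradient is zero iff
`μ_ℂ p = 0` or `dμ_ℂ(p) = 0`; and `dμ_ℂ(x,y)(x',y') = ∑ xᵢ y'ᵢ + yᵢ x'ᵢ` vanishes only at the origin.
-/

open scoped InnerProductSpace ComplexConjugate

theorem HasFDerivAt.gradient_norm_sq_eq_zero_iff {E F : Type*} [NormedAddCommGroup E]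
    [InnerProductSpace ℝ E] [CompleteSpace E] [NormedAddCommGroup F] [InnerProductSpace ℝ F]
    {g : E → F} {L : E →L[ℝ] F} {p : E} (hg : HasFDerivAt g L p) :
    gradient (‖g ·‖ ^ 2) p = 0 ↔ ∀ v, ⟪g p, L v⟫_ℝ = 0 := by
  rw [gradient, hg.norm_sq.fderiv, EmbeddingLike.map_eq_zero_iff, ContinuousLinearMap.ext_iff]
  simp

theorem forall_inner_apply_eq_zero_iff {V : Type*} [AddCommGroup V] [Module ℂ V]
    (w : ℂ) (L : V →ₗ[ℂ] ℂ) : (∀ v, ⟪w, L v⟫_ℝ = 0) ↔ w = 0 ∨ L = 0 := by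
  refine ⟨fun h => or_iff_not_imp_left.2 fun hw => LinearMap.ext fun v => ?_, ?_⟩
  · -- test against `(w * conj (L v)) • v`, which pairs with `w` to `‖w‖² ‖L v‖²`
    have := h ((w * conj (L v)) • v)
    have hprod : w * conj (L v) * L v * conj w = (Complex.normSq w * Complex.normSq (L v) : ℝ) := by
      push_cast
      rw [← Complex.mul_conj, ← Complex.mul_conj]
      ring
    rw [map_smul, smul_eq_mul, Complex.inner, hprod, Complex.ofReal_re] at this
    simpa [hw] using this
  · rintro (rfl | rfl) v <;> simp

namespace HypVS

variable {n : ℕ}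

def xCoord (i : Fin n) : HypVS n →L[ℂ] ℂ :=
  (EuclideanSpace.proj i).comp ((ContinuousLinearMap.fst ℂ _ _).comp
    (WithLp.prodContinuousLinearEquiv 2 ℂ _ _).toContinuousLinearMap)

def yCoord (i : Fin n) : HypVS n →L[ℂ] ℂ :=
  (EuclideanSpace.proj i).comp ((ContinuousLinearMap.snd ℂ _ _).comp
    (WithLp.prodContinuousLinearEquiv 2 ℂ _ _).toContinuousLinearMap)

@[simp] lemma xCoord_apply (i : Fin n) (q : HypVS n) : xCoord i q = xPart q i := rfl

@[simp] lemma yCoord_apply (i : Fin n) (q : HypVS n) : yCoord i q = yPart q i := rfl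

def muCDeriv (p : HypVS n) : HypVS n →L[ℂ] ℂ :=
  ∑ i, (xPart p i • yCoord i + yPart p i • xCoord i)

lemma muCDeriv_apply (p v : HypVS n) :
    muCDeriv p v = ∑ i, (xPart p i * yPart v i + yPart p i * xPart v i) := by
  simp [muCDeriv]

lemma hasFDerivAt_muC_s5 (c : ℂ) (p : HypVS n) : HasFDerivAt (muC c) (muCDeriv p) p :=
  (HasFDerivAt.fun_sum fun i _ => (xCoord i).hasFDerivAt.mul (yCoord i).hasFDerivAt).sub_const c

lemma muCDeriv_eq_zero_iff {p : HypVS n} : muCDeriv p = 0 ↔ p = 0 := by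
  refine ⟨fun h => ?_, fun h => ?_⟩
  · -- at the vector `(conj y, conj x)` the derivative equals `⟪p, p⟫_ℂ`
    have hself : muCDeriv p (WithLp.toLp 2 (WithLp.toLp 2 fun i => conj (yPart p i),
        WithLp.toLp 2 fun i => conj (xPart p i))) = ⟪p, p⟫_ℂ := by
      simp only [muCDeriv_apply, WithLp.prod_inner_apply, PiLp.inner_apply, RCLike.inner_apply,
        Finset.sum_add_distrib]
      rfl
    rwa [h, zero_apply, eq_comm, inner_self_eq_zero] at hself
  · ext v
    simp [muCDeriv_apply, h, xPart, yPart]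

end HypVS

theorem stmt5_general (n : ℕ) (c : ℂ) (f : HypVS n → ℝ)
    (hf : ∀ p, f p = ‖muC c p‖ ^ 2) (p : HypVS n) :
    gradient f p = 0 ↔ ((∑ i, xPart p i * yPart p i) = c ∨ p = 0) := by
  obtain rfl : f = (‖muC c ·‖ ^ 2) := funext hf
  rw [((HypVS.hasFDerivAt_muC_s5 c p).restrictScalars ℝ).gradient_norm_sq_eq_zero_iff]
  refine (forall_inner_apply_eq_zero_iff (muC c p) (HypVS.muCDeriv p : HypVS n →ₗ[ℂ] ℂ)).trans
    (or_congr sub_eq_zero ?_)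
  rw [← ContinuousLinearMap.toLinearMap_zero, ContinuousLinearMap.coe_inj, HypVS.muCDeriv_eq_zero_iff]

theorem stmt5 (n : ℕ) (c : ℂ) (hc : c ≠ 0) (f : HypVS n → ℝ)
    (hf : ∀ p, f p = ‖muC c p‖ ^ 2) (p : HypVS n) :
    gradient f p = 0 ↔ ((∑ i, xPart p i * yPart p i) = c ∨ p = 0) :=
  stmt5_general n c f hf p
end
end

section
/- Let E be a finite-dimensional real inner product space, and let f, g : E → ℝ be twice continuously differentiable functions such that ⟨grad f(y), grad g(y)⟩ = 0 for all y ∈ E. Suppose x ∈ E is a common critical point: grad f(x) = 0 and grad g(x) = 0. Let H_f = D(grad f)(x) and H_g = D(grad g)(x) be the Hessian operators of f and g at x (the derivatives of the gradient maps at x, viewed as linear endomorphisms of E). Then the Hessians anticommute: H_f ∘ H_g + H_g ∘ H_f = 0. -/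
/-!
Differentiating `⟪∇f, ∇g⟫ ≡ 0` gives `⟪H_f(y) v, ∇g(y)⟫ + ⟪H_g(y) v, ∇f(y)⟫ = 0` for every `y`.
For C² functions this identity cannot be differentiated once more, but each term is a merely
continuous factor paired with a gradient vanishing at `x`, and such a product is still
differentiable at `x`. Differentiating at `x` in the direction `w` yields
`⟪H_f v, H_g w⟫ + ⟪H_g v, H_f w⟫ = 0`, which is the anticommutation once the Hessians are known
to be self-adjoint.
-/

open scoped RealInnerProductSpace
open Filter Topology Asymptotics InnerProductSpace

section ClmApply

variable {𝕜 E G H : Type*} [NontriviallyNormedField 𝕜] [NormedAddCommGroup E] [NormedSpace 𝕜 E]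
  [NormedAddCommGroup G] [NormedSpace 𝕜 G] [NormedAddCommGroup H] [NormedSpace 𝕜 H]

theorem HasFDerivAt.clm_apply_of_eq_zero {A : E → G →L[𝕜] H} {u : E → G} {U : E →L[𝕜] G}
    {x : E} (hA : ContinuousAt A x) (hu : HasFDerivAt u U x) (hux : u x = 0) :
    HasFDerivAt (fun y ↦ A y (u y)) ((A x).comp U) x := by
  have hremainder : HasFDerivAt (fun y ↦ (A y - A x) (u y)) (0 : E →L[𝕜] H) x := by
    refine HasFDerivAt.of_isLittleO ?_
    simp only [sub_self, zero_apply, hux, map_zero, sub_zero]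
    have hsmall : (fun y ↦ ‖A y - A x‖) =o[𝓝 x] (fun _ ↦ (1 : ℝ)) :=
      (isLittleO_one_iff ℝ).2 (tendsto_iff_norm_sub_tendsto_zero.1 hA)
    have hbig : (fun y ↦ ‖u y‖) =O[𝓝 x] (fun y ↦ ‖y - x‖) := by
      simpa [hux] using hu.isBigO_sub.norm_norm
    refine (IsBigO.of_norm_le fun y ↦ (A y - A x).le_opNorm (u y)).trans_isLittleO ?_
    simpa using (hsmall.mul_isBigO hbig).norm_right
  convert ((A x).hasFDerivAt.comp x hu).add hremainder using 1
  · ext y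
    simp
  · simp

end ClmApply

section Orthogonal

variable {E F : Type*} [NormedAddCommGroup E] [NormedSpace ℝ E]
  [NormedAddCommGroup F] [InnerProductSpace ℝ F] {a b : E → F}

theorem inner_fderiv_add_inner_fderiv_eq_zero {y : E} (ha : DifferentiableAt ℝ a y)
    (hb : DifferentiableAt ℝ b y) (horth : ∀ z, ⟪a z, b z⟫ = 0) (v : E) :
    ⟪fderiv ℝ a y v, b y⟫ + ⟪fderiv ℝ b y v, a y⟫ = 0 := by
  have hderiv := fderiv_inner_apply ℝ ha hb v
  simp only [funext horth, fderiv_fun_const, Pi.zero_apply, zero_apply] at hderiv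
  linarith [real_inner_comm (fderiv ℝ b y v) (a y)]

theorem inner_fderiv_add_inner_fderiv_eq_zero_of_eq_zero (ha : ContDiff ℝ 1 a)
    (hb : ContDiff ℝ 1 b) (horth : ∀ z, ⟪a z, b z⟫ = 0) {x : E} (hax : a x = 0) (hbx : b x = 0)
    (v w : E) : ⟪fderiv ℝ a x v, fderiv ℝ b x w⟫ + ⟪fderiv ℝ b x v, fderiv ℝ a x w⟫ = 0 := by
  have hda := ha.differentiable one_ne_zero
  have hdb := hb.differentiable one_ne_zero
  have hca := ha.continuous_fderiv one_ne_zero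
  have hcb := hb.continuous_fderiv one_ne_zero
  have hderiv : HasFDerivAt
      (fun y ↦ innerSL ℝ (fderiv ℝ a y v) (b y) + innerSL ℝ (fderiv ℝ b y v) (a y))
      ((innerSL ℝ (fderiv ℝ a x v)).comp (fderiv ℝ b x) +
        (innerSL ℝ (fderiv ℝ b x v)).comp (fderiv ℝ a x)) x :=
    (HasFDerivAt.clm_apply_of_eq_zero (by fun_prop) (hdb x).hasFDerivAt hbx).add
      (HasFDerivAt.clm_apply_of_eq_zero (by fun_prop) (hda x).hasFDerivAt hax)
  have hzero : HasFDerivAt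
      (fun y ↦ innerSL ℝ (fderiv ℝ a y v) (b y) + innerSL ℝ (fderiv ℝ b y v) (a y))
      (0 : E →L[ℝ] ℝ) x := by
    simp only [innerSL_apply_apply, inner_fderiv_add_inner_fderiv_eq_zero (hda _) (hdb _) horth]
    exact hasFDerivAt_const 0 x
  simpa using congr($(hderiv.unique hzero) w)

end Orthogonal

section Gradient

variable {E : Type*} [NormedAddCommGroup E] [InnerProductSpace ℝ E] [CompleteSpace E]

theorem ContDiff.gradient {f : E → ℝ} {m n : WithTop ℕ∞} (hf : ContDiff ℝ n f)
    (hmn : m + 1 ≤ n) : ContDiff ℝ m (gradient f) :=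
  (toDual ℝ E).symm.contDiff.comp (hf.fderiv_right hmn)

theorem inner_fderiv_gradient_apply (f : E → ℝ) (x v w : E) :
    ⟪fderiv ℝ (gradient f) x v, w⟫ = fderiv ℝ (fderiv ℝ f) x v w := by
  rw [show gradient f = (toDual ℝ E).symm ∘ fderiv ℝ f from rfl,
    LinearIsometryEquiv.comp_fderiv]
  exact toDual_symm_apply

theorem ContDiffAt.inner_fderiv_gradient_comm {f : E → ℝ} {x : E} (hf : ContDiffAt ℝ 2 f x)
    (v w : E) : ⟪fderiv ℝ (gradient f) x v, w⟫ = ⟪v, fderiv ℝ (gradient f) x w⟫ := by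
  rw [real_inner_comm _ v, inner_fderiv_gradient_apply, inner_fderiv_gradient_apply]
  exact hf.isSymmSndFDerivAt (by simp [minSmoothness_of_isRCLikeNormedField]) v w

end Gradient

theorem stmt7 {E : Type*} [NormedAddCommGroup E] [InnerProductSpace ℝ E]
    [FiniteDimensional ℝ E]
    (f g : E → ℝ) (hf : ContDiff ℝ 2 f) (hg : ContDiff ℝ 2 g)
    (horth : ∀ y : E, ⟪gradient f y, gradient g y⟫ = 0)
    (x : E) (hfx : gradient f x = 0) (hgx : gradient g x = 0) :
    (fderiv ℝ (gradient f) x).comp (fderiv ℝ (gradient g) x) +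
      (fderiv ℝ (gradient g) x).comp (fderiv ℝ (gradient f) x) = 0 := by
  have hanti := inner_fderiv_add_inner_fderiv_eq_zero_of_eq_zero
    (hf.gradient (by norm_num)) (hg.gradient (by norm_num)) horth hfx hgx
  have hf_symm := hf.contDiffAt.inner_fderiv_gradient_comm (x := x)
  have hg_symm := hg.contDiffAt.inner_fderiv_gradient_comm (x := x)
  set Hf := fderiv ℝ (gradient f) x
  set Hg := fderiv ℝ (gradient g) x
  ext v
  refine ext_inner_right ℝ fun w ↦ ?_
  calc ⟪(Hf ∘L Hg + Hg ∘L Hf) v, w⟫ = ⟪Hf (Hg v), w⟫ + ⟪Hg (Hf v), w⟫ := inner_add_left ..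
    _ = ⟪Hg v, Hf w⟫ + ⟪Hf v, Hg w⟫ := by rw [hf_symm (Hg v), hg_symm (Hf v)]
    _ = ⟪(0 : E →L[ℝ] E) v, w⟫ := by rw [add_comm, hanti, zero_apply, inner_zero_left]
end

section
/- Let V be a finite-dimensional real inner product space and let A, B₂, B₃ be linear endomorphisms of V such that A is self-adjoint, B₂ and B₃ are skew-adjoint, the three operators A, B₂, B₃ pairwise commute, and ker A ⊆ ker B₂ ∩ ker B₃. Then for any v ∈ V, if A(B₂² + B₃²)v = 0 then B₂v = 0 and B₃v = 0; that is, ker(A(B₂² + B₃²)) ⊆ ker B₂ ∩ ker B₃. -/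
/-!
With `S = B₂² + B₃²`, skew-adjointness gives `⟪S u, u⟫ = -(‖B₂ u‖² + ‖B₃ u‖²)`, so `S` is
symmetric with `ker S = ker B₂ ∩ ker B₃`. If `A (S v) = 0`, then `S v ∈ ker A ⊆ ker S`, and a
symmetric operator satisfies `ker S ∩ range S = 0`; hence `S v = 0`, i.e. `B₂ v = B₃ v = 0`.
-/

open scoped RealInnerProductSpace

namespace LinearMap

variable {V : Type*} [NormedAddCommGroup V] [InnerProductSpace ℝ V]

theorem IsSymmetric.ker_comp_self {T : V →ₗ[ℝ] V} (hT : T.IsSymmetric) :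
    ker (T ∘ₗ T) = ker T := by
  ext v
  refine ⟨fun hv => ?_, fun hv => by simp_all⟩
  have : ⟪T v, T v⟫ = 0 := by
    rw [← hT, ← comp_apply, mem_ker.mp hv, inner_zero_left]
  exact inner_self_eq_zero.mp this

variable {B C : V →ₗ[ℝ] V}

theorem isSymmetric_comp_self_of_skew (hB : ∀ u v : V, ⟪B u, v⟫ = -⟪u, B v⟫) :
    (B ∘ₗ B).IsSymmetric := fun u v => by
  simp only [comp_apply, hB, neg_neg]

theorem ker_comp_self_add_comp_self_of_skew (hB : ∀ u v : V, ⟪B u, v⟫ = -⟪u, B v⟫)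
    (hC : ∀ u v : V, ⟪C u, v⟫ = -⟪u, C v⟫) :
    ker (B ∘ₗ B + C ∘ₗ C) = ker B ⊓ ker C := by
  ext u
  refine ⟨fun hu => ?_, fun ⟨hBu, hCu⟩ => by simp_all⟩
  have hsum : ⟪B u, B u⟫ + ⟪C u, C u⟫ = 0 := by
    have := congrArg (⟪·, u⟫) (mem_ker.mp hu)
    rw [add_apply, comp_apply, comp_apply, inner_add_left, hB (B u), hC (C u), inner_zero_left]
      at this
    linarith
  have hBu := real_inner_self_nonneg (x := B u)
  have hCu := real_inner_self_nonneg (x := C u)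
  exact ⟨inner_self_eq_zero.mp (by linarith : ⟪B u, B u⟫ = 0),
    inner_self_eq_zero.mp (by linarith : ⟪C u, C u⟫ = 0)⟩

end LinearMap

open LinearMap in
theorem stmt10_general {V : Type*} [NormedAddCommGroup V] [InnerProductSpace ℝ V]
    (A B₂ B₃ : V →ₗ[ℝ] V)
    (h2 : ∀ u v : V, ⟪B₂ u, v⟫ = -⟪u, B₂ v⟫)
    (h3 : ∀ u v : V, ⟪B₃ u, v⟫ = -⟪u, B₃ v⟫)
    (hker : LinearMap.ker A ≤ LinearMap.ker B₂ ⊓ LinearMap.ker B₃) :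
    ∀ v : V, A ((B₂ ∘ₗ B₂ + B₃ ∘ₗ B₃) v) = 0 → B₂ v = 0 ∧ B₃ v = 0 := by
  intro v hv
  have hS := (isSymmetric_comp_self_of_skew h2).add (isSymmetric_comp_self_of_skew h3)
  have hkerS := ker_comp_self_add_comp_self_of_skew h2 h3
  have hSv : (B₂ ∘ₗ B₂ + B₃ ∘ₗ B₃) v ∈ ker (B₂ ∘ₗ B₂ + B₃ ∘ₗ B₃) := hkerS ▸ hker hv
  show v ∈ ker B₂ ⊓ ker B₃
  rwa [← hkerS, ← hS.ker_comp_self]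

theorem stmt10 {V : Type*} [NormedAddCommGroup V] [InnerProductSpace ℝ V]
    [FiniteDimensional ℝ V]
    (A B₂ B₃ : V →ₗ[ℝ] V)
    (hA : ∀ u v : V, ⟪A u, v⟫ = ⟪u, A v⟫)
    (h2 : ∀ u v : V, ⟪B₂ u, v⟫ = -⟪u, B₂ v⟫)
    (h3 : ∀ u v : V, ⟪B₃ u, v⟫ = -⟪u, B₃ v⟫)
    (c2 : A ∘ₗ B₂ = B₂ ∘ₗ A) (c3 : A ∘ₗ B₃ = B₃ ∘ₗ A) (c23 : B₂ ∘ₗ B₃ = B₃ ∘ₗ B₂)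
    (hker : LinearMap.ker A ≤ LinearMap.ker B₂ ⊓ LinearMap.ker B₃) :
    ∀ v : V, A ((B₂ ∘ₗ B₂ + B₃ ∘ₗ B₃) v) = 0 → B₂ v = 0 ∧ B₃ v = 0 :=
  stmt10_general A B₂ B₃ h2 h3 hker
end

section
/- Let V be a finite-dimensional real inner product space and let A, B₁, B₂, B₃ be linear endomorphisms of V such that A is self-adjoint, B₁, B₂, B₃ are skew-adjoint, the operators A, B₂, B₃ pairwise commute, B₁ commutes with both B₂ and B₃, and ker A ⊆ ker B₂ ∩ ker B₃. Suppose ξ, ζ, η ∈ V satisfy the system: −B₃ζ + B₂η = 0, 2B₃ξ + Aζ − B₁η = 0, −2B₂ξ + B₁ζ + Aη = 0. Then ξ, ζ, η all lie in ker B₂ ∩ ker B₃. -/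
/-!
Put `w = B₂ζ + B₃η`. Substituting `Aζ` and `Aη` from the last two equations and using the
commutation relations gives `Aw = B₁(B₂η - B₃ζ) = 0`, so `B₂w = B₃w = 0`; as `w` also lies in
`range B₂ + range B₃ = (ker B₂ ∩ ker B₃)ᗮ`, it vanishes. Applying `B₃` to the second equation and
`B₂` to the third and subtracting leaves `2(B₂² + B₃²)ξ = B₁w = 0`, and pairing with `ξ` gives
`‖B₂ξ‖² + ‖B₃ξ‖² = 0`. Finally `B₂ζ = -B₃η` and `B₃ζ = B₂η` give
`‖B₂ζ‖² + ‖B₃ζ‖² = ⟪η, (B₃B₂ - B₂B₃)ζ⟫ = 0`.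
-/

open scoped RealInnerProductSpace

lemma eq_zero_and_eq_zero_of_inner_self_add_inner_self_eq_zero {V : Type*}
    [NormedAddCommGroup V] [InnerProductSpace ℝ V] {x y : V}
    (h : ⟪x, x⟫ + ⟪y, y⟫ = 0) : x = 0 ∧ y = 0 := by
  have hx := real_inner_self_nonneg (x := x)
  have hy := real_inner_self_nonneg (x := y)
  exact ⟨real_inner_self_nonpos.mp (by linarith), real_inner_self_nonpos.mp (by linarith)⟩

namespace LinearMap

variable {V : Type*} [NormedAddCommGroup V] [InnerProductSpace ℝ V]

def IsSkewSymmetric (T : V →ₗ[ℝ] V) : Prop :=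
  ∀ u v, ⟪T u, v⟫ = -⟪u, T v⟫

section

variable {S T : V →ₗ[ℝ] V} (hS : S.IsSkewSymmetric) (hT : T.IsSkewSymmetric)
include hS hT

lemma IsSkewSymmetric.add_eq_zero_of_apply_eq_zero {u v : V}
    (hSw : S (S u + T v) = 0) (hTw : T (S u + T v) = 0) : S u + T v = 0 := by
  refine inner_self_eq_zero (𝕜 := ℝ) |>.mp ?_
  nth_rw 1 [inner_add_left, hS, hT, hSw, hTw]
  simp

lemma IsSkewSymmetric.apply_eq_zero_of_sq_add_sq_apply_eq_zero {x : V}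
    (h : S (S x) + T (T x) = 0) : S x = 0 ∧ T x = 0 := by
  refine eq_zero_and_eq_zero_of_inner_self_add_inner_self_eq_zero ?_
  have hx : ⟪S (S x) + T (T x), x⟫ = 0 := by rw [h, inner_zero_left]
  rw [inner_add_left, hS, hT] at hx
  linarith

lemma IsSkewSymmetric.apply_eq_zero_of_commute {ζ η : V} (hc : S ∘ₗ T = T ∘ₗ S)
    (h₁ : S ζ + T η = 0) (h₂ : T ζ = S η) :
    (S ζ = 0 ∧ T ζ = 0) ∧ (S η = 0 ∧ T η = 0) := by
  have hSζ : S ζ = -T η := eq_neg_of_add_eq_zero_left h₁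
  have hsum : ⟪S ζ, S ζ⟫ + ⟪T ζ, T ζ⟫ = ⟪η, T (S ζ) - S (T ζ)⟫ := by
    nth_rw 1 [hSζ]
    nth_rw 1 [h₂]
    rw [inner_neg_left, hT, hS, inner_sub_right]
    ring
  rw [← comp_apply S T, hc, comp_apply, sub_self, inner_zero_right] at hsum
  obtain ⟨hSζ0, hTζ0⟩ := eq_zero_and_eq_zero_of_inner_self_add_inner_self_eq_zero hsum
  exact ⟨⟨hSζ0, hTζ0⟩, ⟨h₂ ▸ hTζ0, by rw [← neg_eq_zero, ← hSζ, hSζ0]⟩⟩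

end

end LinearMap

theorem stmt11_general {V : Type*} [NormedAddCommGroup V] [InnerProductSpace ℝ V]
    (A B₁ B₂ B₃ : V →ₗ[ℝ] V)
    (h2 : ∀ u v : V, ⟪B₂ u, v⟫ = -⟪u, B₂ v⟫)
    (h3 : ∀ u v : V, ⟪B₃ u, v⟫ = -⟪u, B₃ v⟫)
    (c2 : A ∘ₗ B₂ = B₂ ∘ₗ A) (c3 : A ∘ₗ B₃ = B₃ ∘ₗ A) (c23 : B₂ ∘ₗ B₃ = B₃ ∘ₗ B₂)
    (c12 : B₁ ∘ₗ B₂ = B₂ ∘ₗ B₁) (c13 : B₁ ∘ₗ B₃ = B₃ ∘ₗ B₁)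
    (hker : LinearMap.ker A ≤ LinearMap.ker B₂ ⊓ LinearMap.ker B₃)
    (ξ ζ η : V)
    (e1 : -(B₃ ζ) + B₂ η = 0)
    (e2 : (2 : ℝ) • B₃ ξ + A ζ - B₁ η = 0)
    (e3 : -((2 : ℝ) • B₂ ξ) + B₁ ζ + A η = 0) :
    (B₂ ξ = 0 ∧ B₃ ξ = 0) ∧ (B₂ ζ = 0 ∧ B₃ ζ = 0) ∧ (B₂ η = 0 ∧ B₃ η = 0) := by
  have comm {X Y : V →ₗ[ℝ] V} (h : X ∘ₗ Y = Y ∘ₗ X) (v : V) : X (Y v) = Y (X v) :=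
    LinearMap.congr_fun h v
  have hB₃ζ : B₃ ζ = B₂ η := neg_add_eq_zero.mp e1
  have hAζ : A ζ = B₁ η - (2 : ℝ) • B₃ ξ := by linear_combination (norm := module) e2
  have hAη : A η = (2 : ℝ) • B₂ ξ - B₁ ζ := by linear_combination (norm := module) e3
  have hAw : A (B₂ ζ + B₃ η) = B₁ (B₂ η - B₃ ζ) := by
    rw [map_add, comm c2, comm c3, hAζ, hAη]
    simp only [map_sub, map_smul, comm c12, comm c13, comm c23]
    abel
  rw [hB₃ζ, sub_self, map_zero] at hAw
  obtain ⟨hw₂, hw₃⟩ := hker hAw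
  have hw := LinearMap.IsSkewSymmetric.add_eq_zero_of_apply_eq_zero h2 h3 hw₂ hw₃
  have hξ : (2 : ℝ) • (B₂ (B₂ ξ) + B₃ (B₃ ξ)) = B₁ (B₂ ζ + B₃ η) := by
    have h₂ := congrArg B₂ e3
    have h₃ := congrArg B₃ e2
    simp only [map_add, map_sub, map_neg, map_smul, map_zero, ← comm c2, ← comm c3, hB₃ζ,
      comm c12, comm c13] at h₂ h₃ ⊢
    linear_combination (norm := module) h₃ - h₂
  rw [hw, map_zero, smul_eq_zero] at hξ
  exact ⟨LinearMap.IsSkewSymmetric.apply_eq_zero_of_sq_add_sq_apply_eq_zero h2 h3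
      (hξ.resolve_left two_ne_zero),
    LinearMap.IsSkewSymmetric.apply_eq_zero_of_commute h2 h3 c23 hw hB₃ζ⟩

theorem stmt11 {V : Type*} [NormedAddCommGroup V] [InnerProductSpace ℝ V]
    [FiniteDimensional ℝ V]
    (A B₁ B₂ B₃ : V →ₗ[ℝ] V)
    (hA : ∀ u v : V, ⟪A u, v⟫ = ⟪u, A v⟫)
    (h1 : ∀ u v : V, ⟪B₁ u, v⟫ = -⟪u, B₁ v⟫)
    (h2 : ∀ u v : V, ⟪B₂ u, v⟫ = -⟪u, B₂ v⟫)
    (h3 : ∀ u v : V, ⟪B₃ u, v⟫ = -⟪u, B₃ v⟫)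
    (c2 : A ∘ₗ B₂ = B₂ ∘ₗ A) (c3 : A ∘ₗ B₃ = B₃ ∘ₗ A) (c23 : B₂ ∘ₗ B₃ = B₃ ∘ₗ B₂)
    (c12 : B₁ ∘ₗ B₂ = B₂ ∘ₗ B₁) (c13 : B₁ ∘ₗ B₃ = B₃ ∘ₗ B₁)
    (hker : LinearMap.ker A ≤ LinearMap.ker B₂ ⊓ LinearMap.ker B₃)
    (ξ ζ η : V)
    (e1 : -(B₃ ζ) + B₂ η = 0)
    (e2 : (2 : ℝ) • B₃ ξ + A ζ - B₁ η = 0)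
    (e3 : -((2 : ℝ) • B₂ ξ) + B₁ ζ + A η = 0) :
    (B₂ ξ = 0 ∧ B₃ ξ = 0) ∧ (B₂ ζ = 0 ∧ B₃ ζ = 0) ∧ (B₂ η = 0 ∧ B₃ η = 0) :=
  stmt11_general A B₁ B₂ B₃ h2 h3 c2 c3 c23 c12 c13 hker ξ ζ η e1 e2 e3
end

section
/- Let V be a finite-dimensional real inner product space and let A, B₁, B₂, B₃ be linear endomorphisms of V such that A is self-adjoint, B₁, B₂, B₃ are skew-adjoint, the operators A, B₂, B₃ pairwise commute, B₁ commutes with both B₂ and B₃, and ker A ⊆ ker B₂ ∩ ker B₃. Define φ : V⁴ → V⁴ by φ(α, ξ, ζ, η) = (−B₂ζ − B₃η, −B₃ζ + B₂η, 2B₃ξ + Aζ − B₁η, −2B₂ξ + B₁ζ + Aη). Let S = ker B₂ ∩ ker B₃ and L = V × S × S × S ⊆ V⁴. Then φ(L) ⊆ L and φ⁻¹(L) ⊆ L, and consequently the induced linear endomorphism of the quotient space V⁴/L is bijective. -/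
/-!
The kernel `S = ker B₂ ∩ ker B₃` is invariant under every operator commuting with `B₂` and `B₃`,
which gives `φ(L) ⊆ L`. For the converse, the key fact is that for skew-adjoint `B₂, B₃` the sum
`range B₂ + range B₃` meets `S` only in `0`, since it is orthogonal to `S`. The second component of
`φ w` lies in that sum and in `S`, so `B₂ η = B₃ ζ`. Applying `B₂`, `B₃` to the last two
components and using the commutation relations then gives `A (B₂ ζ + B₃ η) = 0`, so
`B₂ ζ + B₃ η ∈ ker A ⊆ S` vanishes as well, and `(B₂² + B₃²) ξ = 0`. Finally
`⟪(B₂² + B₃²) x, x⟫ = -‖B₂ x‖² - ‖B₃ x‖²`, so `(B₂² + B₃²) x = 0` forces `x ∈ S`; this applies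
to `ξ` and `ζ`, and `η ∈ S` follows from the two vanishing sums. On the finite-dimensional
quotient `V⁴/L` the induced map is injective, hence bijective.
-/

open scoped RealInnerProductSpace

open LinearMap

theorem Module.End.apply_mem_ker_inf_ker_of_commute {R M : Type*} [Semiring R] [AddCommMonoid M]
    [Module R M] {T B C : Module.End R M} (hB : Commute T B) (hC : Commute T C) {x : M}
    (hx : x ∈ ker B ⊓ ker C) : T x ∈ ker B ⊓ ker C := by
  obtain ⟨hxB, hxC⟩ := hx
  refine ⟨?_, ?_⟩
  · rw [SetLike.mem_coe, mem_ker, ← mul_apply, ← hB.eq, mul_apply, hxB, map_zero]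
  · rw [SetLike.mem_coe, mem_ker, ← mul_apply, ← hC.eq, mul_apply, hxC, map_zero]

theorem Submodule.mapQ_injective_of_comap_le {R M : Type*} [Ring R] [AddCommGroup M] [Module R M]
    {p : Submodule R M} {f : M →ₗ[R] M} (h : p ≤ p.comap f) (hf : p.comap f ≤ p) :
    Function.Injective (p.mapQ p f h) := by
  rw [← LinearMap.ker_eq_bot, ker_mapQ, eq_bot_iff, ← p.mkQ_map_self]
  exact map_mono hf

theorem components_mem_ker_inf_ker_of_mem {R M : Type*} [CommRing R] [AddCommGroup M]
    [Module R M] {A B₁ B₂ B₃ : Module.End R M} (hA₂ : Commute A B₂) (hA₃ : Commute A B₃)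
    (h₂₃ : Commute B₂ B₃) (h₁₂ : Commute B₁ B₂) (h₁₃ : Commute B₁ B₃) {ξ ζ η : M}
    (hξ : ξ ∈ ker B₂ ⊓ ker B₃) (hζ : ζ ∈ ker B₂ ⊓ ker B₃) (hη : η ∈ ker B₂ ⊓ ker B₃) :
    -(B₃ ζ) + B₂ η ∈ ker B₂ ⊓ ker B₃ ∧
      (2 : R) • B₃ ξ + A ζ - B₁ η ∈ ker B₂ ⊓ ker B₃ ∧
      -((2 : R) • B₂ ξ) + B₁ ζ + A η ∈ ker B₂ ⊓ ker B₃ := by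
  have inv {T : Module.End R M} (h₂ : Commute T B₂) (h₃ : Commute T B₃) {x : M} :=
    Module.End.apply_mem_ker_inf_ker_of_commute h₂ h₃ (x := x)
  refine ⟨?_, ?_, ?_⟩
  · exact add_mem (neg_mem (inv h₂₃.symm (.refl _) hζ)) (inv (.refl _) h₂₃ hη)
  · exact sub_mem (add_mem (Submodule.smul_mem _ _ (inv h₂₃.symm (.refl _) hξ))
      (inv hA₂ hA₃ hζ)) (inv h₁₂ h₁₃ hη)
  · exact add_mem (add_mem (neg_mem (Submodule.smul_mem _ _ (inv (.refl _) h₂₃ hξ)))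
      (inv h₁₂ h₁₃ hζ)) (inv hA₂ hA₃ hη)

section SkewAdjoint

variable {V : Type*} [NormedAddCommGroup V] [InnerProductSpace ℝ V] {B C : V →ₗ[ℝ] V}

theorem add_eq_zero_of_mem_ker_inf_ker (hB : ∀ u v : V, ⟪B u, v⟫ = -⟪u, B v⟫)
    (hC : ∀ u v : V, ⟪C u, v⟫ = -⟪u, C v⟫) {x y : V} (h : B x + C y ∈ ker B ⊓ ker C) :
    B x + C y = 0 := by
  obtain ⟨hBv, hCv⟩ := h
  have hself : ⟪B x + C y, B x + C y⟫ = -⟪x, B (B x + C y)⟫ - ⟪y, C (B x + C y)⟫ := by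
    rw [inner_add_left, hB, hC]
    ring
  rw [← inner_self_eq_zero (𝕜 := ℝ), hself, hBv, hCv, inner_zero_right, inner_zero_right]
  ring

theorem mem_ker_inf_ker_of_sq_add_sq_eq_zero (hB : ∀ u v : V, ⟪B u, v⟫ = -⟪u, B v⟫)
    (hC : ∀ u v : V, ⟪C u, v⟫ = -⟪u, C v⟫) {x : V} (h : B (B x) + C (C x) = 0) :
    x ∈ ker B ⊓ ker C := by
  have hnorm : ⟪B x, B x⟫ + ⟪C x, C x⟫ = 0 := by
    have := congrArg (⟪·, x⟫) h
    simp only [inner_add_left, inner_zero_left, hB (B x), hC (C x)] at this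
    linarith
  obtain ⟨hB0, hC0⟩ :=
    (add_eq_zero_iff_of_nonneg real_inner_self_nonneg real_inner_self_nonneg).mp hnorm
  exact ⟨inner_self_eq_zero.mp hB0, inner_self_eq_zero.mp hC0⟩

theorem mem_ker_inf_ker_of_components_mem {A B₁ B₂ B₃ : V →ₗ[ℝ] V}
    (hB₂ : ∀ u v : V, ⟪B₂ u, v⟫ = -⟪u, B₂ v⟫)
    (hB₃ : ∀ u v : V, ⟪B₃ u, v⟫ = -⟪u, B₃ v⟫) (hA₂ : Commute A B₂) (hA₃ : Commute A B₃)
    (h₂₃ : Commute B₂ B₃) (h₁₂ : Commute B₁ B₂) (h₁₃ : Commute B₁ B₃)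
    (hker : ker A ≤ ker B₂ ⊓ ker B₃) {ξ ζ η : V}
    (hφ₂ : -(B₃ ζ) + B₂ η ∈ ker B₂ ⊓ ker B₃)
    (hφ₃ : (2 : ℝ) • B₃ ξ + A ζ - B₁ η ∈ ker B₂ ⊓ ker B₃)
    (hφ₄ : -((2 : ℝ) • B₂ ξ) + B₁ ζ + A η ∈ ker B₂ ⊓ ker B₃) :
    ξ ∈ ker B₂ ⊓ ker B₃ ∧ ζ ∈ ker B₂ ⊓ ker B₃ ∧ η ∈ ker B₂ ⊓ ker B₃ := by
  have eA₂ x : B₂ (A x) = A (B₂ x) := (LinearMap.congr_fun hA₂.eq x).symm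
  have eA₃ x : B₃ (A x) = A (B₃ x) := (LinearMap.congr_fun hA₃.eq x).symm
  have e₁₂ x : B₂ (B₁ x) = B₁ (B₂ x) := (LinearMap.congr_fun h₁₂.eq x).symm
  have e₁₃ x : B₃ (B₁ x) = B₁ (B₃ x) := (LinearMap.congr_fun h₁₃.eq x).symm
  have e₂₃ x : B₃ (B₂ x) = B₂ (B₃ x) := (LinearMap.congr_fun h₂₃.eq x).symm
  simp only [Submodule.mem_inf, mem_ker, map_add, map_sub, map_neg, map_smul, eA₂, eA₃, e₁₂,
    e₁₃, e₂₃] at hφ₃ hφ₄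
  have hq : B₃ ζ = B₂ η := by
    have h := add_eq_zero_of_mem_ker_inf_ker hB₂ hB₃ (x := η) (y := -ζ)
      (by rwa [map_neg, add_comm])
    rw [map_neg] at h
    linear_combination (norm := module) -h
  have hp : B₂ ζ + B₃ η = 0 := by
    refine add_eq_zero_of_mem_ker_inf_ker hB₂ hB₃ (hker ?_)
    rw [mem_ker, map_add]
    linear_combination (norm := module) hφ₃.1 + hφ₄.2 - congrArg B₁ hq
  have hp' : B₂ ζ = -B₃ η := eq_neg_of_add_eq_zero_left hp
  have hB₁p : B₁ (B₂ ζ) + B₁ (B₃ η) = 0 := by rw [← map_add, hp, map_zero]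
  have hξ := mem_ker_inf_ker_of_sq_add_sq_eq_zero hB₂ hB₃ (x := ξ) <| by
    linear_combination (norm := module) (1 / 2 : ℝ) • (hφ₃.2 - hφ₄.1 - congrArg A hq + hB₁p)
  have hζ := mem_ker_inf_ker_of_sq_add_sq_eq_zero hB₂ hB₃ (x := ζ) <| by
    rw [hp', hq, map_neg, e₂₃, neg_add_cancel]
  simp only [Submodule.mem_inf, mem_ker] at hζ ⊢
  refine ⟨hξ, hζ, ?_, ?_⟩
  · rw [← hq, hζ.2]
  · rw [← neg_eq_zero, ← hp', hζ.1]

end SkewAdjoint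

theorem stmt12_general {V : Type*} [NormedAddCommGroup V] [InnerProductSpace ℝ V]
    [FiniteDimensional ℝ V]
    (A B₁ B₂ B₃ : V →ₗ[ℝ] V)
    (h2 : ∀ u v : V, ⟪B₂ u, v⟫ = -⟪u, B₂ v⟫)
    (h3 : ∀ u v : V, ⟪B₃ u, v⟫ = -⟪u, B₃ v⟫)
    (c2 : A ∘ₗ B₂ = B₂ ∘ₗ A) (c3 : A ∘ₗ B₃ = B₃ ∘ₗ A) (c23 : B₂ ∘ₗ B₃ = B₃ ∘ₗ B₂)
    (c12 : B₁ ∘ₗ B₂ = B₂ ∘ₗ B₁) (c13 : B₁ ∘ₗ B₃ = B₃ ∘ₗ B₁)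
    (hker : LinearMap.ker A ≤ LinearMap.ker B₂ ⊓ LinearMap.ker B₃)
    (φ : (V × V × V × V) →ₗ[ℝ] (V × V × V × V))
    (hφ : ∀ w : V × V × V × V,
      φ w = (-(B₂ w.2.2.1) - B₃ w.2.2.2,
             -(B₃ w.2.2.1) + B₂ w.2.2.2,
             (2 : ℝ) • B₃ w.2.1 + A w.2.2.1 - B₁ w.2.2.2,
             -((2 : ℝ) • B₂ w.2.1) + B₁ w.2.2.1 + A w.2.2.2))
    (L : Submodule ℝ (V × V × V × V))
    (hL : L = (⊤ : Submodule ℝ V).prod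
      ((LinearMap.ker B₂ ⊓ LinearMap.ker B₃).prod
        ((LinearMap.ker B₂ ⊓ LinearMap.ker B₃).prod
          (LinearMap.ker B₂ ⊓ LinearMap.ker B₃)))) :
    (∀ w ∈ L, φ w ∈ L) ∧ (∀ w : V × V × V × V, φ w ∈ L → w ∈ L) ∧
    ∀ h : L ≤ L.comap φ, Function.Bijective (Submodule.mapQ L L φ h) := by
  have hφL : ∀ w ∈ L, φ w ∈ L := by
    rintro ⟨_, ξ, ζ, η⟩ hw
    rw [hL] at hw ⊢
    obtain ⟨-, hξ, hζ, hη⟩ := hw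
    rw [hφ]
    exact ⟨trivial, components_mem_ker_inf_ker_of_mem c2 c3 c23 c12 c13 hξ hζ hη⟩
  have hφL' : ∀ w, φ w ∈ L → w ∈ L := by
    rintro ⟨_, ξ, ζ, η⟩ hw
    rw [hL, hφ] at hw
    obtain ⟨-, hφ₂, hφ₃, hφ₄⟩ := hw
    rw [hL]
    exact ⟨trivial, mem_ker_inf_ker_of_components_mem h2 h3 c2 c3 c23 c12 c13 hker hφ₂ hφ₃ hφ₄⟩
  refine ⟨hφL, hφL', fun h => ?_⟩
  have hinj := Submodule.mapQ_injective_of_comap_le h hφL'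
  exact ⟨hinj, LinearMap.injective_iff_surjective.mp hinj⟩

theorem stmt12 {V : Type*} [NormedAddCommGroup V] [InnerProductSpace ℝ V]
    [FiniteDimensional ℝ V]
    (A B₁ B₂ B₃ : V →ₗ[ℝ] V)
    (hA : ∀ u v : V, ⟪A u, v⟫ = ⟪u, A v⟫)
    (h1 : ∀ u v : V, ⟪B₁ u, v⟫ = -⟪u, B₁ v⟫)
    (h2 : ∀ u v : V, ⟪B₂ u, v⟫ = -⟪u, B₂ v⟫)
    (h3 : ∀ u v : V, ⟪B₃ u, v⟫ = -⟪u, B₃ v⟫)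
    (c2 : A ∘ₗ B₂ = B₂ ∘ₗ A) (c3 : A ∘ₗ B₃ = B₃ ∘ₗ A) (c23 : B₂ ∘ₗ B₃ = B₃ ∘ₗ B₂)
    (c12 : B₁ ∘ₗ B₂ = B₂ ∘ₗ B₁) (c13 : B₁ ∘ₗ B₃ = B₃ ∘ₗ B₁)
    (hker : LinearMap.ker A ≤ LinearMap.ker B₂ ⊓ LinearMap.ker B₃)
    (φ : (V × V × V × V) →ₗ[ℝ] (V × V × V × V))
    (hφ : ∀ w : V × V × V × V,
      φ w = (-(B₂ w.2.2.1) - B₃ w.2.2.2,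
             -(B₃ w.2.2.1) + B₂ w.2.2.2,
             (2 : ℝ) • B₃ w.2.1 + A w.2.2.1 - B₁ w.2.2.2,
             -((2 : ℝ) • B₂ w.2.1) + B₁ w.2.2.1 + A w.2.2.2))
    (L : Submodule ℝ (V × V × V × V))
    (hL : L = (⊤ : Submodule ℝ V).prod
      ((LinearMap.ker B₂ ⊓ LinearMap.ker B₃).prod
        ((LinearMap.ker B₂ ⊓ LinearMap.ker B₃).prod
          (LinearMap.ker B₂ ⊓ LinearMap.ker B₃)))) :
    (∀ w ∈ L, φ w ∈ L) ∧ (∀ w : V × V × V × V, φ w ∈ L → w ∈ L) ∧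
    ∀ h : L ≤ L.comap φ, Function.Bijective (Submodule.mapQ L L φ h) :=
  stmt12_general A B₁ B₂ B₃ h2 h3 c2 c3 c23 c12 c13 hker φ hφ L hL
end
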